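/- arXiv:2102.09874 — 2 statements merged into one kernel-verified Lean document; each statement's English description precedes it below -/
import Mathlib

section
/- Let M be a block matrix (A B; C D) over a commutative ring, where C is a square invertible matrix. Then the ideal generated by the maximal minors of M equals the ideal generated by the maximal minors of N = B − A·C⁻¹·D. In particular, M drops maximal rank at a point if and only if N does. -/
open Matrix

section Aux

variable {R : Type*} [CommRing R]

/-- Submatrix (rows only) of a product. -/
private lemma submatrix_mul_id' {l m p q : Type*} [Fintype m]
    (X : Matrix l m R) (Y : Matrix m p R) (f : q → l) :
    (X * Y).submatrix f id = X.submatrix f id * Y := by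
  ext i j
  simp [Matrix.mul_apply]

/-- Any maximal minor of the block matrix `(0 N; C 0)` lies in the ideal generated by
the maximal minors of `N`. -/
private lemma antidiag_minor_mem {r c n : ℕ}
    (N : Matrix (Fin r) (Fin n) R) (C : Matrix (Fin c) (Fin c) R)
    (φ : (Fin c ⊕ Fin n) → (Fin r ⊕ Fin c)) :
    ((Matrix.fromBlocks 0 N C 0).submatrix φ id).det ∈
      Ideal.span {d : R | ∃ g : Fin n → Fin r,
        Function.Injective g ∧ d = ((N.submatrix g id)).det} := by
  classical
  set P : Matrix (Fin c ⊕ Fin n) (Fin c ⊕ Fin n) R :=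
    (Matrix.fromBlocks 0 N C 0).submatrix φ id with hP
  set q : Fin c ⊕ Fin n → Prop := fun i => (φ i).isLeft with hq
  by_cases hcard : Fintype.card {i // q i} = n
  · -- the balanced case: the determinant is ± a `C`-minor times an `N`-minor
    have hcardc : Fintype.card {i // ¬ q i} = c := by
      rw [Fintype.card_subtype_compl, hcard]
      simp [Fintype.card_sum]
    let eS : Fin n ≃ {i // q i} := (Fintype.equivFinOfCardEq hcard).symm
    let eT : Fin c ≃ {i // ¬ q i} := (Fintype.equivFinOfCardEq hcardc).symm
    let e : (Fin c ⊕ Fin n) ≃ (Fin c ⊕ Fin n) :=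
      (Equiv.sumCongr eT eS).trans ((Equiv.sumComm _ _).trans (Equiv.sumCompl q))
    have heL : ∀ k : Fin c, e (Sum.inl k) = (eT k : Fin c ⊕ Fin n) := fun k => rfl
    have heR : ∀ m : Fin n, e (Sum.inr m) = (eS m : Fin c ⊕ Fin n) := fun m => rfl
    have hS : ∀ m : Fin n, (φ (eS m : Fin c ⊕ Fin n)).isLeft := fun m => (eS m).2
    have hT : ∀ k : Fin c, (φ (eT k : Fin c ⊕ Fin n)).isRight := fun k =>
      Sum.not_isLeft.mp (eT k).2
    let s : Fin n → Fin r := fun m => (φ (eS m : Fin c ⊕ Fin n)).getLeft (hS m)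
    let t : Fin c → Fin c := fun k => (φ (eT k : Fin c ⊕ Fin n)).getRight (hT k)
    have hφS : ∀ m : Fin n, φ (eS m : Fin c ⊕ Fin n) = Sum.inl (s m) := fun m =>
      (Sum.inl_getLeft _ (hS m)).symm
    have hφT : ∀ k : Fin c, φ (eT k : Fin c ⊕ Fin n) = Sum.inr (t k) := fun k =>
      (Sum.inr_getRight _ (hT k)).symm
    have hPe : P.submatrix e id =
        Matrix.fromBlocks (C.submatrix t id) 0 0 (N.submatrix s id) := by
      ext i j
      cases i with
      | inl k =>
        have : φ (e (Sum.inl k)) = Sum.inr (t k) := by rw [heL]; exact hφT k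
        cases j <;> simp [P, Matrix.submatrix_apply, this, Matrix.fromBlocks]
      | inr m =>
        have : φ (e (Sum.inr m)) = Sum.inl (s m) := by rw [heR]; exact hφS m
        cases j <;> simp [P, Matrix.submatrix_apply, this, Matrix.fromBlocks]
    have hdet1 : ((Equiv.Perm.sign e : ℤ) : R) * P.det =
        (C.submatrix t id).det * (N.submatrix s id).det := by
      rw [← Matrix.det_permute e P, hPe, Matrix.det_fromBlocks_zero₂₁]
    have hsign : ((Equiv.Perm.sign e : ℤ) : R) * ((Equiv.Perm.sign e : ℤ) : R) = 1 := by
      rw [← Int.cast_mul, ← Units.val_mul, Int.units_mul_self, Units.val_one, Int.cast_one]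
    have hdet : P.det = ((Equiv.Perm.sign e : ℤ) : R) *
        ((C.submatrix t id).det * (N.submatrix s id).det) := by
      rw [← hdet1, ← mul_assoc, hsign, one_mul]
    rw [hdet]
    by_cases hs : Function.Injective s
    · exact Ideal.mul_mem_left _ _ (Ideal.mul_mem_left _ _
        (Ideal.subset_span ⟨s, hs, rfl⟩))
    · -- two equal rows make the `N`-minor vanish
      have : (N.submatrix s id).det = 0 := by
        rw [Function.not_injective_iff] at hs
        obtain ⟨a, b, hab, hne⟩ := hs
        refine Matrix.det_zero_of_row_eq hne ?_
        ext j
        simp [Matrix.submatrix_apply, hab]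
      rw [this, mul_zero, mul_zero]
      exact Ideal.zero_mem _
  · -- unbalanced case: the determinant vanishes
    have hzero : P.det = 0 := by
      rw [Matrix.det_apply']
      refine Finset.sum_eq_zero fun σ _ => ?_
      have hprod : (∏ i, P (σ i) i) = 0 := by
        rcases lt_or_gt_of_ne hcard with hlt | hgt
        · -- fewer than n rows hit the left block: an N-column has a zero entry
          have : ∃ m : Fin n, ¬ q (σ (Sum.inr m)) := by
            by_contra h
            push_neg at h
            have hinj : Function.Injective
                (fun m : Fin n => (⟨σ (Sum.inr m), h m⟩ : {i // q i})) := by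
              intro a b hab
              have := congrArg Subtype.val hab
              exact Sum.inr_injective (σ.injective this)
            have := Fintype.card_le_of_injective _ hinj
            rw [Fintype.card_fin] at this
            exact absurd this (not_le.mpr hlt)
          obtain ⟨m, hm⟩ := this
          refine Finset.prod_eq_zero (Finset.mem_univ (Sum.inr m)) ?_
          obtain ⟨y, hy⟩ := Sum.isRight_iff.mp (Sum.not_isLeft.mp hm)
          simp [P, Matrix.submatrix_apply, hy, Matrix.fromBlocks]
        · -- fewer than c rows hit the right block: a C-column has a zero entry
          have hb : Fintype.card {i // q i} ≤ c + n := by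
            have := Fintype.card_subtype_le q
            simpa [Fintype.card_sum] using this
          have hcc : Fintype.card {i // ¬ q i} < c := by
            rw [Fintype.card_subtype_compl]
            simp only [Fintype.card_sum, Fintype.card_fin]
            omega
          have : ∃ k : Fin c, q (σ (Sum.inl k)) := by
            by_contra h
            push_neg at h
            have hinj : Function.Injective
                (fun k : Fin c => (⟨σ (Sum.inl k), h k⟩ : {i // ¬ q i})) := by
              intro a b hab
              have := congrArg Subtype.val hab
              exact Sum.inl_injective (σ.injective this)
            have := Fintype.card_le_of_injective _ hinj
            rw [Fintype.card_fin] at this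
            exact absurd this (not_le.mpr hcc)
          obtain ⟨k, hk⟩ := this
          refine Finset.prod_eq_zero (Finset.mem_univ (Sum.inl k)) ?_
          obtain ⟨x, hx⟩ := Sum.isLeft_iff.mp hk
          simp [P, Matrix.submatrix_apply, hx, Matrix.fromBlocks]
      rw [hprod, mul_zero]
    rw [hzero]
    exact Ideal.zero_mem _

end Aux

/-- For a block matrix `M = (A B; C D)` with `C` square and invertible, the ideal
generated by the maximal minors of `M` equals the ideal generated by the maximal
minors of `N = B - A·C⁻¹·D`. -/
theorem maximal_minors_block_reduction {R : Type*} [CommRing R]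
    (r c n : ℕ) (hrn : n ≤ r)
    (A : Matrix (Fin r) (Fin c) R) (B : Matrix (Fin r) (Fin n) R)
    (C : Matrix (Fin c) (Fin c) R) (D : Matrix (Fin c) (Fin n) R)
    (hC : IsUnit C.det) :
    Ideal.span {d : R | ∃ f : (Fin c ⊕ Fin n) → (Fin r ⊕ Fin c),
        Function.Injective f ∧ d = ((Matrix.fromBlocks A B C D).submatrix f id).det} =
    Ideal.span {d : R | ∃ g : Fin n → Fin r,
        Function.Injective g ∧ d = ((B - A * C⁻¹ * D).submatrix g id).det} := by
  classical
  have hCinv : Invertible C := C.invertibleOfIsUnitDet hC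
  have hCC : C * C⁻¹ = 1 := Matrix.mul_nonsing_inv C hC
  have hCC' : C⁻¹ * C = 1 := Matrix.nonsing_inv_mul C hC
  set N : Matrix (Fin r) (Fin n) R := B - A * C⁻¹ * D with hN
  apply le_antisymm
  · -- every maximal minor of M is in the ideal of maximal minors of N
    rw [Ideal.span_le]
    rintro d ⟨f, -, rfl⟩
    -- factor M = U * (M'' * V)
    set U : Matrix (Fin r ⊕ Fin c) (Fin r ⊕ Fin c) R :=
      Matrix.fromBlocks 1 (A * C⁻¹) 0 1 with hU
    set M'' : Matrix (Fin r ⊕ Fin c) (Fin c ⊕ Fin n) R :=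
      Matrix.fromBlocks 0 N C 0 with hM''
    set V : Matrix (Fin c ⊕ Fin n) (Fin c ⊕ Fin n) R :=
      Matrix.fromBlocks 1 (C⁻¹ * D) 0 1 with hV
    have h1 : C * (C⁻¹ * D) = D := by rw [← Matrix.mul_assoc, hCC, Matrix.one_mul]
    have h2 : A * C⁻¹ * C = A := by rw [Matrix.mul_assoc, hCC', Matrix.mul_one]
    have h3 : A * (C⁻¹ * D) = A * C⁻¹ * D := (Matrix.mul_assoc _ _ _).symm
    have hB : N + A * C⁻¹ * D = B := by rw [hN]; exact sub_add_cancel _ _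
    have hfact : Matrix.fromBlocks A B C D = U * (M'' * V) := by
      rw [hU, hM'', hV, Matrix.fromBlocks_multiply, Matrix.fromBlocks_multiply]
      simp only [Matrix.one_mul, Matrix.mul_one, Matrix.zero_mul, Matrix.mul_zero,
        add_zero, zero_add, h1, h2, h3, hB]
    have hdetV : V.det = 1 := by
      rw [hV, Matrix.det_fromBlocks_zero₂₁, Matrix.det_one, Matrix.det_one, one_mul]
    -- expand the minor via multilinearity of det in the rows
    set W : Matrix (Fin r ⊕ Fin c) (Fin c ⊕ Fin n) R := M'' * V with hW
    have hsub : (Matrix.fromBlocks A B C D).submatrix f id = U.submatrix f id * W := by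
      rw [hfact, submatrix_mul_id']
    set X : Matrix (Fin c ⊕ Fin n) (Fin r ⊕ Fin c) R := U.submatrix f id with hX
    have hrows : (X * W) = Matrix.of (fun i => ∑ j, X i j • W j) := by
      ext i j'
      simp [Matrix.mul_apply, Finset.sum_apply]
    have hexp : (X * W).det =
        ∑ φ : (Fin c ⊕ Fin n) → (Fin r ⊕ Fin c),
          (∏ i, X i (φ i)) • (W.submatrix φ id).det := by
      have h4 : (X * W).det =
          (Matrix.detRowAlternating : ((Fin c ⊕ Fin n) → R)
              [⋀^(Fin c ⊕ Fin n)]→ₗ[R] R)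
            (fun i => ∑ j, X i j • W j) := by
        rw [hrows]; rfl
      rw [h4]
      have h5 := ((Matrix.detRowAlternating :
          ((Fin c ⊕ Fin n) → R) [⋀^(Fin c ⊕ Fin n)]→ₗ[R] R
          ).toMultilinearMap).map_sum (g := fun i (j : Fin r ⊕ Fin c) => X i j • W j)
      refine h5.trans ?_
      refine Finset.sum_congr rfl fun φ _ => ?_
      rw [MultilinearMap.map_smul_univ]
      rfl
    rw [hsub, hexp]
    refine Ideal.sum_mem _ fun φ _ => ?_
    rw [smul_eq_mul]
    refine Ideal.mul_mem_left _ _ ?_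
    have hWdet : (W.submatrix φ id).det = (M''.submatrix φ id).det := by
      rw [hW, submatrix_mul_id' M'' V φ, Matrix.det_mul, hdetV, mul_one]
    rw [hWdet, hM'']
    exact antidiag_minor_mem N C φ
  · -- every maximal minor of N is (a unit multiple of) a maximal minor of M
    rw [Ideal.span_le]
    rintro d ⟨g, hg, rfl⟩
    set f : (Fin c ⊕ Fin n) → (Fin r ⊕ Fin c) :=
      Sum.elim Sum.inr (Sum.inl ∘ g) with hf
    have hfinj : Function.Injective f := by
      intro a b hab
      cases a with
      | inl x =>
        cases b with
        | inl y => exact congrArg Sum.inl (Sum.inr_injective hab)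
        | inr y => exact absurd hab (by simp [hf])
      | inr x =>
        cases b with
        | inl y => exact absurd hab (by simp [hf])
        | inr y => exact congrArg Sum.inr (hg (Sum.inl_injective hab))
    have hsub : (Matrix.fromBlocks A B C D).submatrix f id =
        Matrix.fromBlocks C D (A.submatrix g id) (B.submatrix g id) := by
      ext i j
      cases i <;> cases j <;> rfl
    have hAsub : A.submatrix g id * C⁻¹ * D = (A * C⁻¹ * D).submatrix g id := by
      rw [← submatrix_mul_id' A C⁻¹ g, ← submatrix_mul_id' (A * C⁻¹) D g]
    have hdet : ((Matrix.fromBlocks A B C D).submatrix f id).det =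
        C.det * (N.submatrix g id).det := by
      rw [hsub, Matrix.det_fromBlocks₁₁, Matrix.invOf_eq_nonsing_inv, hAsub, hN,
        Matrix.submatrix_sub]
      rfl
    have hd : (N.submatrix g id).det =
        (↑hC.unit⁻¹ : R) * ((Matrix.fromBlocks A B C D).submatrix f id).det := by
      rw [hdet, ← mul_assoc, IsUnit.val_inv_mul, one_mul]
    rw [hd]
    exact Ideal.mul_mem_left _ _ (Ideal.subset_span ⟨f, hfinj, rfl⟩)
end

section
/- Let N be a (c+2) × 3 matrix of linear forms on ℙ^k (c ≥ 3) whose entries satisfy: the first column's entries in rows 1,...,c+1 are the coordinates x₁,...,x_{c+1}, the (c+2,1) entry is 0, the (c+2,2) entry is x_{c+2}, and the (c+2,3) entry is x_{c+3}. Let P be a point with x₁(P) = ... = x_{c+1}(P) = x_{c+2}(P) = x_{c+3}(P) = 0, and assume the (c+1) × 2 matrix N' obtained by deleting the first column and last row of N has rank 2 at P. Denote by f_{ijh} the 3×3 minor of N on rows i < j < h. Then for rows i < j < h ≤ c+1, the gradient at P satisfies ∇f_{ijh}(P) = (jh)·e_i − (ih)·e_j + (ij)·e_h, where (ab) is the 2×2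 minor of N'(P) on rows a, b, and e_m is the m-th standard basis vector; and ∇f_{ij,c+2}(P) = 0. -/
open Matrix MvPolynomial

/-- The gradient at the point `Pt` of the `3×3` minor of `N` on rows `i, j, h`
(derivatives taken with respect to all coordinates). -/
noncomputable def gradAt {k c : ℕ} (Pt : Fin (k + 1) → ℂ)
    (N : Matrix (Fin (c + 2)) (Fin 3) (MvPolynomial (Fin (k + 1)) ℂ))
    (i j h : Fin (c + 2)) : Fin (k + 1) → ℂ :=
  fun m => eval Pt (pderiv m ((N.submatrix ![i, j, h] id).det))

/-- The `2×2` minor `(ab)` on rows `a, b` of the matrix obtained from `N` by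
deleting the first column, evaluated at `Pt`. -/
noncomputable def mnrAt {k c : ℕ} (Pt : Fin (k + 1) → ℂ)
    (N : Matrix (Fin (c + 2)) (Fin 3) (MvPolynomial (Fin (k + 1)) ℂ))
    (a b : Fin (c + 2)) : ℂ :=
  eval Pt (N a 1) * eval Pt (N b 2) - eval Pt (N b 1) * eval Pt (N a 2)

/-- Computation of the Jacobian of the `3×3` minors of the structured matrix `N` at a
point `P` of the linear space `L`: for rows `i < j < h ≤ c+1` one has
`∇f_{ijh}(P) = (jh)·e_i − (ih)·e_j + (ij)·e_h`, and `∇f_{ij,c+2}(P) = 0`. -/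
theorem jacobian_of_minors_at_L (k c : ℕ) (hc : 3 ≤ c) (hk : c + 3 ≤ k)
    (N : Matrix (Fin (c + 2)) (Fin 3) (MvPolynomial (Fin (k + 1)) ℂ))
    (Pt : Fin (k + 1) → ℂ)
    (hlin : ∀ i j, (N i j).IsHomogeneous 1)
    (hcol1 : ∀ i : Fin (c + 1), N i.castSucc 0 = X (⟨(i : ℕ) + 1, by omega⟩ : Fin (k + 1)))
    (hlast0 : N (Fin.last (c + 1)) 0 = 0)
    (hlast1 : N (Fin.last (c + 1)) 1 = X (⟨c + 2, by omega⟩ : Fin (k + 1)))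
    (hlast2 : N (Fin.last (c + 1)) 2 = X (⟨c + 3, by omega⟩ : Fin (k + 1)))
    (hP : ∀ m : Fin (k + 1), 1 ≤ (m : ℕ) → (m : ℕ) ≤ c + 3 → Pt m = 0)
    (hrank : (Matrix.of fun (a : Fin (c + 1)) (b : Fin 2) =>
        eval Pt (N a.castSucc b.succ)).rank = 2) :
    (∀ i j h : Fin (c + 2), i < j → j < h → (h : ℕ) < c + 1 →
      gradAt Pt N i j h =
        mnrAt Pt N j h • (Pi.single (⟨(i : ℕ) + 1, by omega⟩ : Fin (k + 1)) (1 : ℂ) : Fin (k + 1) → ℂ)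
          - mnrAt Pt N i h • (Pi.single (⟨(j : ℕ) + 1, by omega⟩ : Fin (k + 1)) (1 : ℂ) : Fin (k + 1) → ℂ)
          + mnrAt Pt N i j • (Pi.single (⟨(h : ℕ) + 1, by omega⟩ : Fin (k + 1)) (1 : ℂ) : Fin (k + 1) → ℂ)) ∧
    (∀ i j : Fin (c + 2), i < j → j < Fin.last (c + 1) →
      gradAt Pt N i j (Fin.last (c + 1)) = 0) := by
  have hN0 : ∀ a : Fin (c + 2), (a : ℕ) < c + 1 →
      N a 0 = X (⟨(a : ℕ) + 1, by omega⟩ : Fin (k + 1)) := by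
    intro a ha
    have h1 : (⟨(a : ℕ), ha⟩ : Fin (c + 1)).castSucc = a := by ext; simp
    have := hcol1 ⟨(a : ℕ), ha⟩
    rwa [h1] at this
  have hev0 : ∀ a : Fin (c + 2), (a : ℕ) < c + 1 → eval Pt (N a 0) = 0 := by
    intro a ha
    rw [hN0 a ha, eval_X]
    exact hP _ (by simp only [Fin.val_mk]; omega) (by simp only [Fin.val_mk]; omega)
  have hpd0 : ∀ (a : Fin (c + 2)) (ha : (a : ℕ) < c + 1) (m : Fin (k + 1)),
      eval Pt (pderiv m (N a 0)) =
        if m = (⟨(a : ℕ) + 1, by omega⟩ : Fin (k + 1)) then 1 else 0 := by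
    intro a ha m
    rw [hN0 a ha, pderiv_X]
    rcases eq_or_ne m (⟨(a : ℕ) + 1, by omega⟩ : Fin (k + 1)) with he | he
    · subst he; simp
    · simp [Pi.single_apply, Ne.symm he, he]
  constructor
  · intro i j h hij hjh hh
    have hij' : (i : ℕ) < (j : ℕ) := hij
    have hjh' : (j : ℕ) < (h : ℕ) := hjh
    funext m
    have rhs : (mnrAt Pt N j h • (Pi.single (⟨(i : ℕ) + 1, by omega⟩ : Fin (k + 1)) (1 : ℂ) : Fin (k + 1) → ℂ)
          - mnrAt Pt N i h • (Pi.single (⟨(j : ℕ) + 1, by omega⟩ : Fin (k + 1)) (1 : ℂ) : Fin (k + 1) → ℂ)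
          + mnrAt Pt N i j • (Pi.single (⟨(h : ℕ) + 1, by omega⟩ : Fin (k + 1)) (1 : ℂ) : Fin (k + 1) → ℂ)) m =
        mnrAt Pt N j h * (if m = (⟨(i : ℕ) + 1, by omega⟩ : Fin (k + 1)) then 1 else 0)
          - mnrAt Pt N i h * (if m = (⟨(j : ℕ) + 1, by omega⟩ : Fin (k + 1)) then 1 else 0)
          + mnrAt Pt N i j * (if m = (⟨(h : ℕ) + 1, by omega⟩ : Fin (k + 1)) then 1 else 0) := by
      simp [Pi.single_apply, eq_comm]
    rw [rhs]
    show eval Pt (pderiv m ((N.submatrix ![i, j, h] id).det)) = _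
    simp only [Matrix.det_fin_three, Matrix.submatrix_apply, Matrix.cons_val_zero,
      Matrix.cons_val_one, Matrix.head_cons, Matrix.cons_val_two, Matrix.tail_cons, id_eq,
      _root_.map_add, _root_.map_sub, pderiv_mul, _root_.map_mul]
    rw [hev0 i (by omega), hev0 j (by omega), hev0 h hh,
      hpd0 i (by omega) m, hpd0 j (by omega) m, hpd0 h hh m, mnrAt, mnrAt, mnrAt]
    have h1 : ((⟨(i : ℕ) + 1, by omega⟩ : Fin (k + 1)) ≠ (⟨(j : ℕ) + 1, by omega⟩ : Fin (k + 1))) := by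
      simp [Fin.ext_iff]; omega
    have h2 : ((⟨(i : ℕ) + 1, by omega⟩ : Fin (k + 1)) ≠ (⟨(h : ℕ) + 1, by omega⟩ : Fin (k + 1))) := by
      simp [Fin.ext_iff]; omega
    have h3 : ((⟨(j : ℕ) + 1, by omega⟩ : Fin (k + 1)) ≠ (⟨(h : ℕ) + 1, by omega⟩ : Fin (k + 1))) := by
      simp [Fin.ext_iff]; omega
    split_ifs with e1 e2 e3 <;> first | ring | (exfalso; subst_vars; simp_all)
  · intro i j hij hjl
    have hij' : (i : ℕ) < (j : ℕ) := hij
    have hjl' : (j : ℕ) < c + 1 := hjl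
    funext m
    show eval Pt (pderiv m ((N.submatrix ![i, j, Fin.last (c + 1)] id).det)) = 0
    simp only [Matrix.det_fin_three, Matrix.submatrix_apply, Matrix.cons_val_zero,
      Matrix.cons_val_one, Matrix.head_cons, Matrix.cons_val_two, Matrix.tail_cons, id_eq,
      _root_.map_add, _root_.map_sub, pderiv_mul, _root_.map_mul]
    have e1 : eval Pt (N (Fin.last (c + 1)) 0) = 0 := by rw [hlast0]; simp
    have e2 : eval Pt (N (Fin.last (c + 1)) 1) = 0 := by
      rw [hlast1, eval_X]; exact hP _ (by simp only [Fin.val_mk]; omega) (by simp only [Fin.val_mk]; omega)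
    have e3 : eval Pt (N (Fin.last (c + 1)) 2) = 0 := by
      rw [hlast2, eval_X]; exact hP _ (by simp only [Fin.val_mk]; omega) (by simp only [Fin.val_mk]; omega)
    have e4 : pderiv m (N (Fin.last (c + 1)) 0) = 0 := by rw [hlast0]; simp
    rw [hev0 i (by omega), hev0 j (by omega), e1, e2, e3, e4]
    simp
end
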